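/- Let (S,T) be a medium and define δ(S,V) = ℓ(m) if S ≠ V and m is a concise message with Sm = V, and δ(S,V) = 0 if S = V. Then δ is well-defined and is a metric on S: δ(S,V) = 0 if and only if S = V, δ(S,V) = δ(V,S), and δ(S,W) ≤ δ(S,V) + δ(V,W) for all states S, V, W. -/

import Mathlib

open scoped Classical symmDiff

universe u

namespace Media

variable {S : Type u}

/-- The state obtained by applying the message (string of tokens) `m` to the state `s`. -/
def apply (s : S) (m : List (S → S)) : S :=
  m.foldl (fun x τ => τ x) s

/-- The sequence of states `S₀ = s, S₁, …, Sₙ` produced by the message `m` from the state `s`. -/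
def produced (s : S) (m : List (S → S)) : List S :=
  m.scanl (fun x τ => τ x) s

/-- `τ'` is a reverse of the token `τ`. -/
def IsReverse (τ τ' : S → S) : Prop :=
  ∀ P Q : S, P ≠ Q → (τ P = Q ↔ τ' Q = P)

/-- The message `m` is stepwise effective for the state `s`. -/
def StepwiseEffective (s : S) (m : List (S → S)) : Prop :=
  List.Chain' (· ≠ ·) (produced s m)

/-- The message `m` is consistent: it does not contain both a token and its reverse. -/
def Consistent (m : List (S → S)) : Prop :=
  ∀ τ ∈ m, ∀ τ' ∈ m, ¬ IsReverse τ τ'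

/-- The message `m` is concise for the state `s`. -/
def Concise (s : S) (m : List (S → S)) : Prop :=
  StepwiseEffective s m ∧ Consistent m ∧ m.Nodup

/-- The message `m` is vacuous: its indices can be partitioned into pairs of
mutually reverse tokens. -/
def Vacuous (m : List (S → S)) : Prop :=
  ∃ f : Fin m.length → Fin m.length, Function.Involutive f ∧
    (∀ i, f i ≠ i) ∧ ∀ i, IsReverse (m.get i) (m.get (f i))

/-- The message `m` is closed for the state `s`. -/
def Closed (s : S) (m : List (S → S)) : Prop :=
  StepwiseEffective s m ∧ apply s m = s

/-- `(S, T)` is a medium: a token system satisfying axioms [M1] and [M2]. -/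
def IsMedium (T : Set (S → S)) : Prop :=
  (∃ a b : S, a ≠ b) ∧ T.Nonempty ∧ (∀ τ ∈ T, τ ≠ id) ∧
  (∀ P Q : S, P ≠ Q →
    ∃ m : List (S → S), (∀ τ ∈ m, τ ∈ T) ∧ Concise P m ∧ apply P m = Q) ∧
  (∀ (P : S) (m : List (S → S)), (∀ τ ∈ m, τ ∈ T) → Closed P m → Vacuous m)

end Media

open Media

/-! A token of a medium has a reverse: following it by a concise message back gives a closed,
hence vacuous, message, and the first token's partner in the pairing is its reverse. Reversing a
stepwise effective message token by token therefore walks it back. If `p` is concise from `s` to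
`w` and `q` is any stepwise effective message from `s` to `w`, the closed message `q ++ p̃` is
vacuous, and consistency of `p̃` forces every token of `p̃` to be paired with a token of `q`, so
`ℓ(p) ≤ ℓ(q)`. Thus `δ(s, v)` is the least length of a stepwise effective message from `s` to `v`,
and the metric axioms follow from concatenating and reversing such messages. -/

namespace Media

variable {S : Type u}

theorem apply_cons (s : S) (τ : S → S) (m : List (S → S)) : apply s (τ :: m) = apply (τ s) m :=
  rfl

theorem stepwiseEffective_nil (s : S) : StepwiseEffective s [] :=
  List.isChain_singleton s

theorem stepwiseEffective_cons {s : S} {τ : S → S} {m : List (S → S)} :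
    StepwiseEffective s (τ :: m) ↔ s ≠ τ s ∧ StepwiseEffective (τ s) m := by
  have hhead : (produced (τ s) m).head? = some (τ s) := by cases m <;> simp [produced]
  show List.IsChain _ (produced s (τ :: m)) ↔ s ≠ τ s ∧ List.IsChain _ (produced (τ s) m)
  rw [produced, List.scanl_cons, ← produced, List.isChain_cons, hhead]
  simp

theorem IsReverse.symm {τ τ' : S → S} (h : IsReverse τ τ') : IsReverse τ' τ :=
  fun P Q hPQ => (h Q P hPQ.symm).symm

theorem IsReverse.apply_apply {τ τ' : S → S} (h : IsReverse τ τ') {P : S} (hP : P ≠ τ P) :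
    τ' (τ P) = P :=
  (h P (τ P) hP).mp rfl

theorem IsReverse.unique {τ τ' τ'' : S → S} (h' : IsReverse τ τ') (h'' : IsReverse τ τ'') :
    τ' = τ'' := by
  funext Q
  by_cases hQ' : τ' Q = Q
  · by_cases hQ'' : τ'' Q = Q
    · rw [hQ', hQ'']
    · exact absurd (((h' _ _ hQ'').mp ((h'' _ _ hQ'').mpr rfl)).symm.trans hQ') hQ''
  · exact ((h'' _ _ hQ').mp ((h' _ _ hQ').mpr rfl)).symm

/-- The reverse `τ̃` of a token, with the junk value `τ` when `τ` has no reverse. -/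
noncomputable def rev (τ : S → S) : S → S :=
  if h : ∃ τ', IsReverse τ τ' then h.choose else τ

theorem IsReverse.rev_eq {τ τ' : S → S} (h : IsReverse τ τ') : rev τ = τ' := by
  have hex : ∃ τ', IsReverse τ τ' := ⟨τ', h⟩
  rw [rev, dif_pos hex]
  exact hex.choose_spec.unique h

def IsEffectiveMessage (T : Set (S → S)) (s v : S) (m : List (S → S)) : Prop :=
  (∀ τ ∈ m, τ ∈ T) ∧ StepwiseEffective s m ∧ apply s m = v

section EffectiveMessage

variable {T : Set (S → S)}

theorem isEffectiveMessage_nil (s : S) : IsEffectiveMessage T s s [] :=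
  ⟨by simp, stepwiseEffective_nil s, rfl⟩

theorem isEffectiveMessage_cons {s v : S} {τ : S → S} {m : List (S → S)} :
    IsEffectiveMessage T s v (τ :: m) ↔ τ ∈ T ∧ s ≠ τ s ∧ IsEffectiveMessage T (τ s) v m := by
  simp only [IsEffectiveMessage, List.forall_mem_cons, stepwiseEffective_cons, apply_cons]
  tauto

theorem IsEffectiveMessage.append {s v w : S} {m n : List (S → S)}
    (hm : IsEffectiveMessage T s v m) (hn : IsEffectiveMessage T v w n) :
    IsEffectiveMessage T s w (m ++ n) := by
  induction m generalizing s with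
  | nil => obtain ⟨-, -, rfl⟩ := hm; exact hn
  | cons τ m ih =>
    obtain ⟨hτ, hs, hm⟩ := isEffectiveMessage_cons.mp hm
    exact isEffectiveMessage_cons.mpr ⟨hτ, hs, ih hm⟩

/-- `δ` of the paper, encoded as the least length of a stepwise effective message; the junk
value `sInf ∅ = 0` does not arise in a medium. -/
noncomputable def delta (T : Set (S → S)) (s v : S) : ℕ :=
  sInf {n | ∃ m, IsEffectiveMessage T s v m ∧ m.length = n}

theorem delta_le_length {s v : S} {m : List (S → S)} (hm : IsEffectiveMessage T s v m) :
    delta T s v ≤ m.length :=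
  Nat.sInf_le ⟨m, hm, rfl⟩

theorem delta_self (s : S) : delta T s s = 0 :=
  Nat.eq_zero_of_le_zero (delta_le_length (isEffectiveMessage_nil s))

end EffectiveMessage

theorem Vacuous.length_le_of_consistent {q r : List (S → S)} (h : Vacuous (q ++ r))
    (hr : Consistent r) : r.length ≤ q.length := by
  obtain ⟨f, hf, -, hrev⟩ := h
  let e : Fin r.length → Fin (q ++ r).length := fun i => ⟨q.length + i, by simp⟩
  have he : ∀ i, (q ++ r).get (e i) = r.get i := by
    intro i
    simp [e, List.getElem_append_right]
  have hfe : ∀ i, (f (e i) : ℕ) < q.length := by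
    intro i
    refine Nat.lt_of_not_le fun hge => ?_
    have hlt : (f (e i) : ℕ) < q.length + r.length := by simpa using (f (e i)).isLt
    let j : Fin r.length := ⟨f (e i) - q.length, by omega⟩
    have hj : f (e i) = e j :=
      Fin.ext (show (f (e i) : ℕ) = q.length + (f (e i) - q.length) by omega)
    have := hrev (e i)
    rw [hj, he, he] at this
    exact hr _ (List.get_mem _ _) _ (List.get_mem _ _) this
  refine Fin.le_of_injective (fun i => ⟨f (e i), hfe i⟩) fun i j hij => ?_
  have := hf.injective (Fin.ext (Fin.mk.inj_iff.mp hij))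
  exact Fin.ext (by simpa [e] using Fin.val_eq_of_eq this)

noncomputable def revMessage (m : List (S → S)) : List (S → S) :=
  (m.map rev).reverse

@[simp]
theorem length_revMessage (m : List (S → S)) : (revMessage m).length = m.length := by
  simp [revMessage]

namespace IsMedium

variable {T : Set (S → S)} (hM : IsMedium T)
include hM

theorem exists_isReverse {τ : S → S} (hτ : τ ∈ T) : ∃ τ' ∈ T, IsReverse τ τ' := by
  obtain ⟨-, -, hid, M1, M2⟩ := hM
  obtain ⟨s, hs⟩ : ∃ s, τ s ≠ s := by
    by_contra! h
    exact hid τ hτ (funext h)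
  obtain ⟨n, hnT, hn, hns⟩ := M1 (τ s) s hs
  have hloop : IsEffectiveMessage T s s (τ :: n) :=
    isEffectiveMessage_cons.mpr ⟨hτ, hs.symm, hnT, hn.1, hns⟩
  obtain ⟨f, -, -, hrev⟩ := M2 s _ hloop.1 hloop.2
  exact ⟨_, hloop.1 _ (List.get_mem _ _), hrev ⟨0, by simp⟩⟩

theorem rev_mem {τ : S → S} (hτ : τ ∈ T) : rev τ ∈ T := by
  obtain ⟨τ', hτ'T, hτ'⟩ := hM.exists_isReverse hτ
  rwa [hτ'.rev_eq]

theorem isReverse_rev {τ : S → S} (hτ : τ ∈ T) : IsReverse τ (rev τ) := by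
  obtain ⟨τ', -, hτ'⟩ := hM.exists_isReverse hτ
  rwa [hτ'.rev_eq]

theorem isEffectiveMessage_revMessage {s v : S} {m : List (S → S)}
    (hm : IsEffectiveMessage T s v m) : IsEffectiveMessage T v s (revMessage m) := by
  induction m generalizing s with
  | nil => obtain ⟨-, -, rfl⟩ := hm; exact isEffectiveMessage_nil s
  | cons τ m ih =>
    obtain ⟨hτ, hs, hm⟩ := isEffectiveMessage_cons.mp hm
    have hback : rev τ (τ s) = s := (hM.isReverse_rev hτ).apply_apply hs
    have hstep : IsEffectiveMessage T (τ s) s [rev τ] :=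
      isEffectiveMessage_cons.mpr ⟨hM.rev_mem hτ, by rwa [hback, ne_comm], by
        rw [hback]; exact isEffectiveMessage_nil s⟩
    simpa [revMessage] using (ih hm).append hstep

theorem consistent_revMessage {m : List (S → S)} (hmT : ∀ τ ∈ m, τ ∈ T) (hm : Consistent m) :
    Consistent (revMessage m) := by
  simp only [Consistent, revMessage, List.mem_reverse, List.forall_mem_map]
  intro a ha b hb hab
  have hba : rev b = a := ((hM.isReverse_rev (hmT a ha)).symm.unique hab).symm
  exact hm b hb a ha (hba ▸ hM.isReverse_rev (hmT b hb))

theorem length_le_of_concise {s w : S} {p q : List (S → S)} (hpT : ∀ τ ∈ p, τ ∈ T)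
    (hp : Concise s p) (hpw : apply s p = w) (hq : IsEffectiveMessage T s w q) :
    p.length ≤ q.length := by
  have hloop := hq.append (hM.isEffectiveMessage_revMessage ⟨hpT, hp.1, hpw⟩)
  have hcons := hM.consistent_revMessage hpT hp.2.1
  obtain ⟨-, -, -, -, M2⟩ := hM
  simpa using (M2 s _ hloop.1 hloop.2).length_le_of_consistent hcons

theorem exists_isEffectiveMessage_length_eq_delta (s v : S) :
    ∃ m, IsEffectiveMessage T s v m ∧ m.length = delta T s v := by
  have hne : {n | ∃ m, IsEffectiveMessage T s v m ∧ m.length = n}.Nonempty := by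
    by_cases hsv : s = v
    · exact ⟨0, [], hsv ▸ isEffectiveMessage_nil s, rfl⟩
    · obtain ⟨-, -, -, M1, -⟩ := hM
      obtain ⟨m, hmT, hm, hmv⟩ := M1 s v hsv
      exact ⟨m.length, m, ⟨hmT, hm.1, hmv⟩, rfl⟩
  exact Nat.sInf_mem hne

theorem delta_eq_length_of_concise {s v : S} {m : List (S → S)} (hmT : ∀ τ ∈ m, τ ∈ T)
    (hm : Concise s m) (hmv : apply s m = v) : delta T s v = m.length := by
  obtain ⟨q, hq, hql⟩ := hM.exists_isEffectiveMessage_length_eq_delta s v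
  exact (delta_le_length ⟨hmT, hm.1, hmv⟩).antisymm (hql ▸ hM.length_le_of_concise hmT hm hmv hq)

theorem delta_eq_zero_iff {s v : S} : delta T s v = 0 ↔ s = v := by
  refine ⟨fun h => ?_, fun h => h ▸ delta_self s⟩
  obtain ⟨m, ⟨-, -, hmv⟩, hm⟩ := hM.exists_isEffectiveMessage_length_eq_delta s v
  rw [h, List.length_eq_zero_iff] at hm
  subst hm
  exact hmv

theorem delta_comm (s v : S) : delta T s v = delta T v s := by
  have hle : ∀ s v : S, delta T v s ≤ delta T s v := fun s v => by
    obtain ⟨m, hm, hml⟩ := hM.exists_isEffectiveMessage_length_eq_delta s v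
    simpa [hml] using delta_le_length (hM.isEffectiveMessage_revMessage hm)
  exact (hle v s).antisymm (hle s v)

theorem delta_triangle (s v w : S) : delta T s w ≤ delta T s v + delta T v w := by
  obtain ⟨m, hm, hml⟩ := hM.exists_isEffectiveMessage_length_eq_delta s v
  obtain ⟨n, hn, hnl⟩ := hM.exists_isEffectiveMessage_length_eq_delta v w
  simpa [hml, hnl] using delta_le_length (hm.append hn)

end IsMedium

end Media

/-- Theorem 5.1: the function `δ` on pairs of states, defined by `δ(s, v) = ℓ(m)`
for a concise message `m` producing `v` from `s` (and `δ(s, s) = 0`), is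
well-defined and is a metric on the set of states. -/
theorem medium_delta_metric {S : Type u} {T : Set (S → S)} (hM : IsMedium T) :
    ∃ δ : S → S → ℕ,
      (∀ s : S, δ s s = 0) ∧
      (∀ (s v : S) (m : List (S → S)), s ≠ v → (∀ τ ∈ m, τ ∈ T) →
        Concise s m → apply s m = v → δ s v = m.length) ∧
      (∀ s v : S, (δ s v = 0 ↔ s = v)) ∧
      (∀ s v : S, δ s v = δ v s) ∧
      (∀ s v w : S, δ s w ≤ δ s v + δ v w) :=
  ⟨delta T, delta_self, fun _ _ _ _ hmT hm hmv => hM.delta_eq_length_of_concise hmT hm hmv,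
    fun _ _ => hM.delta_eq_zero_iff, hM.delta_comm, hM.delta_triangle⟩
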